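/- A T1 completely regular space with a countable generating* family (with respect to some set of operations) is separable metrizable. -/
import Mathlib


open Set

/-- A real-valued function is bounded. -/
def BddFun {X : Type*} (f : X → ℝ) : Prop := ∃ C : ℝ, ∀ x, |f x| ≤ C

/-- A set of continuous operations on Euclidean spaces (of various arities). -/
abbrev OpFamily := Set ((n : ℕ) × C((Fin n → ℝ), ℝ))

/-- The functions obtainable as finite compositions of members of `Φ`,
members of `M`, and continuous functions `ℝ → ℝ`. -/
inductive Generated {X : Type*} [TopologicalSpace X]
    (Φ : Set C(X, ℝ)) (M : OpFamily) : (X → ℝ) → Prop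
  | base (φ : C(X, ℝ)) (hφ : φ ∈ Φ) : Generated Φ M φ
  | post (g : C(ℝ, ℝ)) (f : X → ℝ) (hf : Generated Φ M f) :
      Generated Φ M (fun x => g (f x))
  | op (p : (n : ℕ) × C((Fin n → ℝ), ℝ)) (hp : p ∈ M)
      (f : Fin p.1 → X → ℝ) (hf : ∀ i, Generated Φ M (f i)) :
      Generated Φ M (fun x => p.2 (fun i => f i x))

/-- `Φ` is generating* with respect to `M`: every bounded continuous real-valued
function on `X` is a composition of members of `Φ`, `M` and `C(ℝ)`. -/
def IsGeneratingStar {X : Type*} [TopologicalSpace X]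
    (Φ : Set C(X, ℝ)) (M : OpFamily) : Prop :=
  ∀ f : C(X, ℝ), BddFun (f : X → ℝ) → Generated Φ M (f : X → ℝ)

section Aux

variable {X : Type*} [TopologicalSpace X] {Φ : Set C(X, ℝ)} {M : OpFamily}

/-- Generated functions are constant on fibers of the evaluation map. -/
lemma Generated.eq_of_eval {f : X → ℝ} (hf : Generated Φ M f) {x y : X}
    (h : ∀ φ : Φ, (φ : C(X, ℝ)) x = (φ : C(X, ℝ)) y) : f x = f y := by
  induction hf with
  | base φ hφ => exact h ⟨φ, hφ⟩
  | post g f hf ih => simp [ih]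
  | op p hp f hf ih =>
      have : (fun i => f i x) = fun i => f i y := funext fun i => ih i
      simp [this]

/-- Generated functions are continuous along the comap of the evaluation map. -/
lemma Generated.tendsto_comap {f : X → ℝ} (hf : Generated Φ M f) (x : X) :
    Filter.Tendsto f (Filter.comap (fun z (φ : Φ) => (φ : C(X, ℝ)) z)
      (nhds (fun φ : Φ => (φ : C(X, ℝ)) x))) (nhds (f x)) := by
  set e : X → (Φ → ℝ) := fun z (φ : Φ) => (φ : C(X, ℝ)) z with he
  induction hf with
  | base φ hφ =>
      have h1 : Filter.Tendsto e (Filter.comap e (nhds (e x))) (nhds (e x)) :=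
        Filter.tendsto_comap
      have h2 : Filter.Tendsto (fun g : Φ → ℝ => g ⟨φ, hφ⟩) (nhds (e x))
          (nhds (e x ⟨φ, hφ⟩)) := (continuous_apply _).tendsto _
      exact h2.comp h1
  | post g f hf ih => exact (g.continuous.tendsto _).comp ih
  | op p hp f hf ih =>
      have h1 : Filter.Tendsto (fun z (i : Fin p.1) => f i z)
          (Filter.comap e (nhds (e x))) (nhds fun i => f i x) :=
        tendsto_pi_nhds.mpr ih
      exact (p.2.continuous.tendsto _).comp h1

end Aux

/-- A completely regular T1 space with a countable generating* family is
separable metrizable. -/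
theorem stmt1 {X : Type*} [TopologicalSpace X] [T1Space X] [CompletelyRegularSpace X]
    (Φ : Set C(X, ℝ)) (hc : Φ.Countable) (M : OpFamily) (hΦ : IsGeneratingStar Φ M) :
    TopologicalSpace.MetrizableSpace X ∧ TopologicalSpace.SeparableSpace X := by
  haveI := hc.to_subtype
  set e : X → (Φ → ℝ) := fun z (φ : Φ) => (φ : C(X, ℝ)) z with he
  -- the key tool: separate a point from a closed set with a generated function
  have key : ∀ (x : X) (K : Set X), IsClosed K → x ∉ K →
      ∃ f : X → ℝ, Generated Φ M f ∧ f x = 0 ∧ ∀ y ∈ K, f y = 1 := by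
    intro x K hK hx
    obtain ⟨f, hf, hfx, hfK⟩ := CompletelyRegularSpace.completely_regular x K hK hx
    refine ⟨fun z => (f z : ℝ), ?_, by simp [hfx], fun y hy => by simp [hfK hy]⟩
    refine hΦ ⟨fun z => (f z : ℝ), continuous_subtype_val.comp hf⟩ ⟨1, fun z => ?_⟩
    have := (f z).2
    simp only [Set.mem_Icc] at this
    rw [abs_le]; constructor <;> simp <;> linarith [this.1, this.2]
  have hinj : Function.Injective e := by
    intro x y hxy
    by_contra hne
    obtain ⟨f, hgen, hfx, hfy⟩ := key x {y} isClosed_singleton (by simpa using hne)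
    have := hgen.eq_of_eval (x := x) (y := y) (fun φ => congrFun hxy φ)
    rw [hfx, hfy y rfl] at this
    norm_num at this
  have hind : Topology.IsInducing e := by
    rw [Topology.isInducing_iff_nhds]
    intro x
    refine le_antisymm ?_ ?_
    · exact (Continuous.tendsto (by
        exact continuous_pi fun φ => (φ : C(X, ℝ)).continuous) x).le_comap
    · intro U hU
      obtain ⟨V, hVU, hVopen, hxV⟩ := mem_nhds_iff.mp hU
      obtain ⟨f, hgen, hfx, hfK⟩ := key x Vᶜ hVopen.isClosed_compl (by simpa using hxV)
      have htend := hgen.tendsto_comap (Φ := Φ) (M := M) x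
      have hmem : f ⁻¹' (Set.Iio (1/2 : ℝ)) ∈
          Filter.comap e (nhds (e x)) := by
        apply htend
        rw [hfx]
        exact Iio_mem_nhds (by norm_num)
      refine Filter.mem_of_superset hmem ?_
      intro z hz
      by_contra hzV
      have : f z = 1 := hfK z (by simpa using fun h => hzV (hVU h))
      simp only [Set.mem_preimage, Set.mem_Iio, this] at hz
      norm_num at hz
  have hemb : Topology.IsEmbedding e := ⟨hind, hinj⟩
  haveI : SecondCountableTopology X := hind.secondCountableTopology
  exact ⟨hemb.metrizableSpace,
    TopologicalSpace.SecondCountableTopology.to_separableSpace⟩
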